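/- arXiv:1902.10689 — 3 statements merged into one kernel-verified Lean document; each statement's English description precedes it below -/
import Mathlib

section
/- Let G be a finite nested group with chain of centers G = X_0 > X_1 > ⋯ > X_n ≥ 1. If N is any normal subgroup of G, then for each i with 1 ≤ i ≤ n, either [X_{i-1},G] ≤ N or N ≤ X_i. -/
/-!
Suppose `N ≰ X (i + 1)` but `⁅x, g⁆ ∉ N` for some `x ∈ X i`. The permutation representation of
`G` on `G ⧸ N` has kernel `N`, so one of its irreducible constituents `χ` has `N ≤ ker χ` and
`⁅x, g⁆ ∉ ker χ`. Its center `Z(χ) = X j` contains `ker χ ≥ N`, which forces `j ≤ i`, hence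
`x ∈ X i ≤ Z(χ)`. An element of `Z(χ)` acts as a scalar: the eigenvalues of an endomorphism of
finite order are roots of unity, and if the norm of their sum equals their number they all
coincide by strict convexity of `ℂ`; being semisimple, the endomorphism is then that scalar.
So `x` acts centrally and `⁅x, g⁆ ∈ ker χ`, a contradiction.
-/

open CategoryTheory

noncomputable section

/-- The kernel of the character of `V`: `{g | χ(g) = χ(1)}`. -/
def charKernel {G : Type} [Group G] (V : FDRep ℂ G) : Set G :=
  {g | V.character g = V.character 1}

/-- The center of the character of `V`: `{g | |χ(g)| = χ(1)}`. -/
def charCenter {G : Type} [Group G] (V : FDRep ℂ G) : Set G :=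
  {g | (‖V.character g‖ : ℂ) = V.character 1}

/-- The degree `χ(1)` of the character of `V`. -/
def charDegree {G : Type} [Group G] (V : FDRep ℂ G) : ℕ :=
  Module.finrank ℂ V

/-- A group is nested if the centers of its irreducible characters form a chain. -/
def Nested (G : Type) [Group G] : Prop :=
  ∀ V W : FDRep ℂ G, Simple V → Simple W →
    charCenter V ⊆ charCenter W ∨ charCenter W ⊆ charCenter V

/-- `G = X 0 > X 1 > ⋯ > X n ≥ 1` is the chain of centers for `G`: the `X i` are the
distinct subgroups arising as centers of irreducible characters of `G`. -/
def IsChainOfCenters {G : Type} [Group G] (n : ℕ) (X : ℕ → Subgroup G) : Prop :=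
  X 0 = ⊤ ∧ (∀ i ≤ n, (X i).Normal) ∧ (∀ i < n, X (i + 1) < X i) ∧
    (∀ i ≤ n, ∃ V : FDRep ℂ G, Simple V ∧ charCenter V = (X i : Set G)) ∧
    (∀ V : FDRep ℂ G, Simple V → ∃ i ≤ n, charCenter V = (X i : Set G))

/-- `N` is a minimal normal subgroup of `H`. -/
def IsMinimalNormal {H : Type*} [Group H] (N : Subgroup H) : Prop :=
  N.Normal ∧ N ≠ ⊥ ∧ ∀ K : Subgroup H, K.Normal → K ≠ ⊥ → K ≤ N → K = N

/-- An elementary abelian `p`-group: abelian with every element of order dividing `p`. -/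
def IsElementaryAbelian (p : ℕ) (H : Type*) [Group H] : Prop :=
  (∀ a b : H, a * b = b * a) ∧ ∀ a : H, a ^ p = 1

open Module Polynomial
open scoped commutatorElement

theorem Multiset.exists_eq_replicate_of_norm_sum_eq_card {E : Type*} [NormedAddCommGroup E]
    [NormedSpace ℝ E] [StrictConvexSpace ℝ E] {s : Multiset E} (hs : ∀ z ∈ s, ‖z‖ = 1)
    (hsum : ‖s.sum‖ = card s) : ∃ ω, s = replicate (card s) ω := by
  induction s using Multiset.induction_on with
  | empty => exact ⟨0, rfl⟩
  | cons a s ih =>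
    simp only [mem_cons, forall_eq_or_imp] at hs
    simp only [sum_cons, card_cons, Nat.cast_succ] at hsum
    have hle : ‖s.sum‖ ≤ card s := by
      simpa [map_congr rfl hs.2] using norm_multiset_sum_le s
    obtain ⟨ω, hω⟩ := ih hs.2 (by linarith [norm_add_le a s.sum])
    rcases (card s).eq_zero_or_pos with h0 | hpos
    · exact ⟨a, by simp [card_eq_zero.mp h0]⟩
    have hray : SameRay ℝ a ((card s : ℝ) • ω) := by
      rw [Nat.cast_smul_eq_nsmul, ← sum_replicate, ← hω]
      exact sameRay_iff_norm_add.mpr (by linarith [norm_add_le a s.sum])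
    have hωa : a = ω := by
      have := hray.pos_smul_right (a := ((card s : ℝ))⁻¹) (by positivity)
      rw [inv_smul_smul₀ (Nat.cast_ne_zero.mpr hpos.ne')] at this
      exact this.eq_of_norm_eq (by rw [hs.1, hs.2 ω (hω ▸ mem_replicate.mpr ⟨hpos.ne', rfl⟩)])
    exact ⟨ω, by rw [hωa, card_cons, replicate_succ, ← hω]⟩

namespace Module.End

theorem pow_eq_one_of_hasEigenvalue {K V : Type*} [Field K] [AddCommGroup V] [Module K V]
    {f : End K V} {m : ℕ} (hf : f ^ m = 1) {μ : K} (hμ : f.HasEigenvalue μ) : μ ^ m = 1 := by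
  obtain ⟨v, hv⟩ := hμ.exists_hasEigenvector
  have h := hv.pow_apply m
  rw [hf, one_apply] at h
  exact smul_left_injective K hv.2 (by simpa using h.symm)

variable {V : Type*} [AddCommGroup V] [Module ℂ V] [FiniteDimensional ℂ V]

theorem exists_eq_algebraMap_of_norm_trace_eq_finrank {f : End ℂ V} {m : ℕ} (hm : m ≠ 0)
    (hf : f ^ m = 1) (htr : ‖LinearMap.trace ℂ V f‖ = finrank ℂ V) :
    ∃ ω : ℂ, f = algebraMap ℂ (End ℂ V) ω := by
  have hsplit : f.charpoly.Splits := IsAlgClosed.splits _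
  have hcard : Multiset.card f.charpoly.roots = finrank ℂ V := by
    rw [← LinearMap.charpoly_natDegree f, ← splits_iff_card_roots]
    exact hsplit
  obtain ⟨ω, hω⟩ := Multiset.exists_eq_replicate_of_norm_sum_eq_card
    (fun z hz ↦ Complex.norm_eq_one_of_pow_eq_one (pow_eq_one_of_hasEigenvalue hf
      ((hasEigenvalue_iff_isRoot_charpoly f z).mpr (isRoot_of_mem_roots hz))) hm)
    (by rw [← trace_eq_sum_roots_charpoly_of_splits hsplit, htr, hcard])
  have hcharpoly : f.charpoly = (X - C ω) ^ finrank ℂ V := by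
    rw [hsplit.eq_prod_roots_of_monic (LinearMap.charpoly_monic f), hω, hcard]
    simp
  have hnil : IsNilpotent (f - algebraMap ℂ (End ℂ V) ω) :=
    ⟨finrank ℂ V, by simpa [hcharpoly] using LinearMap.aeval_self_charpoly f⟩
  have hss : f.IsSemisimple := by
    refine isSemisimple_of_squarefree_aeval_eq_zero
      (separable_X_pow_sub_C (1 : ℂ) (by exact_mod_cast hm) one_ne_zero).squarefree ?_
    simp [hf]
  exact ⟨ω, sub_eq_zero.mp (eq_zero_of_isNilpotent_isSemisimple hnil
    (isSemisimple_sub_algebraMap_iff.mpr hss))⟩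

end Module.End

theorem Representation.leftRegular_apply_eq_one_iff {k G : Type*} [Semiring k] [Nontrivial k]
    [Monoid G] {g : G} : leftRegular k G g = 1 ↔ g = 1 := by
  refine ⟨fun h ↦ ?_, fun h ↦ h ▸ map_one _⟩
  have := LinearMap.congr_fun h (MonoidAlgebra.single 1 1)
  rw [ofMulAction_single] at this
  simpa [MonoidAlgebra.single_left_inj one_ne_zero] using this

namespace Subrepresentation

variable {k G V : Type*} [Field k] [Monoid G] [AddCommGroup V] [Module k V]
  {ρ : Representation k G V}

theorem toRepresentation_apply_eq_one (σ : Subrepresentation ρ) {g : G} (hg : ρ g = 1) :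
    σ.toRepresentation g = 1 := by
  ext v
  simp [toRepresentation, hg]

theorem apply_eq_one_of_sup_eq_top {σ τ : Subrepresentation ρ} (hστ : σ ⊔ τ = ⊤) {g : G}
    (hσ : σ.toRepresentation g = 1) (hτ : τ.toRepresentation g = 1) : ρ g = 1 := by
  ext v
  have hv : v ∈ σ.toSubmodule ⊔ τ.toSubmodule := by
    rw [← toSubmodule_sup, hστ]; trivial
  obtain ⟨x, hx, y, hy, rfl⟩ := Submodule.mem_sup.mp hv
  have hx' : ρ g x = x := congrArg Subtype.val (LinearMap.congr_fun hσ ⟨x, hx⟩)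
  have hy' : ρ g y = y := congrArg Subtype.val (LinearMap.congr_fun hτ ⟨y, hy⟩)
  simp [hx', hy']

theorem finrank_lt [FiniteDimensional k V] {σ : Subrepresentation ρ} (hσ : σ ≠ ⊤) :
    finrank k σ.toSubmodule < finrank k V :=
  Submodule.finrank_lt fun h ↦ hσ (toSubmodule_injective h)

end Subrepresentation

theorem FDRep.simple_of_isIrreducible {G : Type} [Group G] {V : Type} [AddCommGroup V]
    [Module ℂ V] [FiniteDimensional ℂ V] (ρ : Representation ℂ G V) [ρ.IsIrreducible] :
    Simple (FDRep.of ρ) := by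
  have : Simple ((forget₂ (FDRep ℂ G) (Rep ℂ G) ⋙ Rep.toModuleMonoidAlgebra).obj (FDRep.of ρ)) :=
    simple_of_isSimpleModule (R := MonoidAlgebra ℂ G) (M := ρ.asModule)
  exact Functor.simple_of_simple_obj (forget₂ (FDRep ℂ G) (Rep ℂ G) ⋙ Rep.toModuleMonoidAlgebra) _

theorem Representation.exists_simple_fdRep_apply_ne_one {G : Type} [Group G] [Finite G]
    {V : Type} [AddCommGroup V] [Module ℂ V] [FiniteDimensional ℂ V]
    (ρ : Representation ℂ G V) {g : G} (hg : ρ g ≠ 1) :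
    ∃ W : FDRep ℂ G, Simple W ∧ (∀ h, ρ h = 1 → W.ρ h = 1) ∧ W.ρ g ≠ 1 := by
  induction hd : finrank ℂ V using Nat.strong_induction_on generalizing V with
  | _ d ih =>
  by_cases hirr : ρ.IsIrreducible
  · exact ⟨FDRep.of ρ, FDRep.simple_of_isIrreducible ρ, fun h hh ↦ hh, hg⟩
  obtain ⟨σ, hσbot, hσtop⟩ : ∃ σ : Subrepresentation ρ, σ ≠ ⊥ ∧ σ ≠ ⊤ := by
    by_contra! h
    have : Nontrivial (Subrepresentation ρ) := ⟨⊥, ⊤, fun hbot ↦ hg <| LinearMap.ext fun v ↦ by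
      have hv : v ∈ (⊥ : Subrepresentation ρ) := by rw [hbot]; exact Submodule.mem_top
      obtain rfl : v = 0 := (Submodule.mem_bot ℂ).mp hv
      simp⟩
    exact hirr ⟨fun σ ↦ or_iff_not_imp_left.mpr (h σ)⟩
  obtain ⟨τ, hστ⟩ := exists_isCompl σ
  have hτtop : τ ≠ ⊤ := fun h ↦ hσbot (disjoint_top.mp (h ▸ hστ.disjoint))
  by_cases hgσ : σ.toRepresentation g = 1
  · have hgτ : τ.toRepresentation g ≠ 1 :=
      fun hgτ ↦ hg (Subrepresentation.apply_eq_one_of_sup_eq_top hστ.sup_eq_top hgσ hgτ)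
    obtain ⟨W, hW, hker, hgW⟩ := ih _ (hd ▸ Subrepresentation.finrank_lt hτtop) _ hgτ rfl
    exact ⟨W, hW, fun h hh ↦ hker h (τ.toRepresentation_apply_eq_one hh), hgW⟩
  · obtain ⟨W, hW, hker, hgW⟩ := ih _ (hd ▸ Subrepresentation.finrank_lt hσtop) _ hgσ rfl
    exact ⟨W, hW, fun h hh ↦ hker h (σ.toRepresentation_apply_eq_one hh), hgW⟩

namespace FDRep

variable {G : Type} [Group G] (V : FDRep ℂ G)

theorem mem_charKernel_of_ρ_eq_one {g : G} (hg : V.ρ g = 1) : g ∈ charKernel V := by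
  simp [charKernel, character, hg]

theorem charKernel_subset_charCenter : charKernel V ⊆ charCenter V := by
  intro g hg
  simp only [charKernel, charCenter, Set.mem_ofPred_eq] at hg ⊢
  simp [hg, char_one]

theorem exists_ρ_eq_algebraMap_of_mem_charCenter [Finite G] {g : G} (hg : g ∈ charCenter V) :
    ∃ ω : ℂ, V.ρ g = algebraMap ℂ (Module.End ℂ V) ω := by
  refine End.exists_eq_algebraMap_of_norm_trace_eq_finrank Nat.card_pos.ne'
    (by rw [← map_pow, pow_card_eq_one', map_one]) ?_
  simp only [charCenter, char_one, Set.mem_ofPred_eq] at hg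
  exact_mod_cast hg

theorem ρ_commutatorElement_eq_one [Finite G] {x : G} (hx : x ∈ charCenter V) (g : G) :
    V.ρ ⁅x, g⁆ = 1 := by
  obtain ⟨ω, hω⟩ := V.exists_ρ_eq_algebraMap_of_mem_charCenter hx
  have hcomm : V.ρ (x * g) = V.ρ (g * x) := by
    rw [map_mul, map_mul, hω, Algebra.commutes]
  rw [show ⁅x, g⁆ = (x * g) * (g * x)⁻¹ by group, map_mul, hcomm, ← map_mul, mul_inv_cancel,
    map_one]

end FDRep

theorem exists_simple_fdRep_of_notMem {G : Type} [Group G] [Finite G] (N : Subgroup G) [N.Normal]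
    {g : G} (hg : g ∉ N) : ∃ W : FDRep ℂ G, Simple W ∧ (∀ n ∈ N, W.ρ n = 1) ∧ W.ρ g ≠ 1 := by
  let ρ := (Representation.leftRegular ℂ (G ⧸ N)).comp (QuotientGroup.mk' N)
  have hρ : ∀ h, ρ h = 1 ↔ h ∈ N := fun h ↦ by
    simp [ρ, Representation.leftRegular_apply_eq_one_iff]
  obtain ⟨W, hW, hker, hgW⟩ := Representation.exists_simple_fdRep_apply_ne_one ρ (mt (hρ g).mp hg)
  exact ⟨W, hW, fun n hn ↦ hker n ((hρ n).mpr hn), hgW⟩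

theorem IsChainOfCenters.antitoneOn {G : Type} [Group G] {n : ℕ} {X : ℕ → Subgroup G}
    (hX : IsChainOfCenters n X) : AntitoneOn X (Set.Iic n) :=
  (strictAntiOn_Iic_of_succ_lt hX.2.2.1).antitoneOn

/-- for `G` nested with chain of centers `X 0 > ⋯ > X n` and any `N ⊴ G`,
for each `1 ≤ i ≤ n` either `⁅X (i-1), G⁆ ≤ N` or `N ≤ X i`. -/
theorem normal_subgroup_dichotomy (G : Type) [Group G] [Fintype G]
    (n : ℕ) (X : ℕ → Subgroup G) (hX : IsChainOfCenters n X)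
    (N : Subgroup G) (hN : N.Normal) :
    ∀ i < n, ⁅X i, (⊤ : Subgroup G)⁆ ≤ N ∨ N ≤ X (i + 1) := by
  intro i hi
  refine or_iff_not_imp_right.mpr fun hNX ↦ Subgroup.commutator_le.mpr fun x hx g _ ↦ ?_
  by_contra hxg
  obtain ⟨W, hW, hNW, hxgW⟩ := exists_simple_fdRep_of_notMem N hxg
  obtain ⟨j, hjn, hWj⟩ := hX.2.2.2.2 W hW
  have hNj : N ≤ X j := fun y hy ↦ by
    rw [← SetLike.mem_coe, ← hWj]
    exact W.charKernel_subset_charCenter (W.mem_charKernel_of_ρ_eq_one (hNW y hy))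
  have hji : j ≤ i := by
    by_contra! hij
    exact hNX (hNj.trans (hX.antitoneOn (Set.mem_Iic.mpr hi) hjn hij))
  have hxW : x ∈ charCenter W := hWj ▸ hX.antitoneOn hjn (Set.mem_Iic.mpr hi.le) hji hx
  exact hxgW (W.ρ_commutatorElement_eq_one hxW g)
end
end

section
/- Let G be a finite nilpotent group such that the set of kernels of the irreducible complex characters of G is totally ordered by inclusion. Then G is a cyclic p-group for some prime p (in particular G is abelian and cyclic, and its order is a prime power). -/
open CategoryTheory

noncomputable section

/-!
Maximal subgroups of a nilpotent group are normal, and a normal maximal subgroup `M` has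
quotient `G ⧸ M` cyclic of prime order, so `M` is the kernel of a linear character. If the
character kernels form a chain, any two maximal subgroups are comparable, hence equal. A finite
group with a unique maximal subgroup `M` is generated by any element outside `M`, so it is
cyclic; and a cyclic group of order `n` has a maximal subgroup of index `q` for every prime
`q ∣ n`, so `n` has a single prime divisor.
-/

section MaximalSubgroups

open Subgroup

variable {G : Type*} [Group G]

theorem Subgroup.isCoatom_of_index_prime {H : Subgroup G} (hH : H.index.Prime) : IsCoatom H := by
  refine ⟨fun h => by simp [h, Nat.not_prime_one] at hH, fun K hK => ?_⟩
  rcases Nat.prime_mul_iff.mp (relIndex_mul_index hK.le ▸ hH) with ⟨-, hK1⟩ | ⟨-, hHK1⟩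
  · exact index_eq_one.mp hK1
  · exact absurd (relIndex_eq_one.mp hHK1) hK.not_ge

theorem isCyclic_quotient_of_isCoatom {M : Subgroup G} [M.Normal] (hM : IsCoatom M) :
    IsCyclic (G ⧸ M) := by
  obtain ⟨g, hg⟩ : ∃ g, g ∉ M := SetLike.exists_not_mem_of_ne_top M hM.1 rfl
  have hcomap : (zpowers (g : G ⧸ M)).comap (QuotientGroup.mk' M) = ⊤ := by
    refine hM.lt_iff.mp (SetLike.lt_iff_le_and_exists.mpr ⟨fun x hx => ?_, g, mem_zpowers _, hg⟩)
    simp [(QuotientGroup.eq_one_iff x).mpr hx]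
  refine ⟨g, fun x => ?_⟩
  obtain ⟨y, rfl⟩ := QuotientGroup.mk'_surjective M x
  exact mem_comap.mp (hcomap ▸ mem_top y)

theorem isCyclic_of_forall_isCoatom_eq [Finite G]
    (huniq : ∀ M N : Subgroup G, IsCoatom M → IsCoatom N → M = N) : IsCyclic G := by
  obtain hbot | ⟨M, hM, -⟩ := eq_top_or_exists_le_coatom (⊥ : Subgroup G)
  · have : Subsingleton G := subsingleton_iff.mp (subsingleton_of_bot_eq_top hbot)
    infer_instance
  obtain ⟨g, hg⟩ : ∃ g, g ∉ M := SetLike.exists_not_mem_of_ne_top M hM.1 rfl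
  refine isCyclic_iff_exists_zpowers_eq_top.mpr ⟨g, ?_⟩
  obtain htop | ⟨N, hN, hgN⟩ := eq_top_or_exists_le_coatom (zpowers g)
  · exact htop
  · exact absurd (huniq N M hN hM ▸ hgN (mem_zpowers g)) hg

theorem index_zpowers_pow_of_dvd_card [Finite G] {g : G} (hg : ∀ x, x ∈ zpowers g) {q : ℕ}
    (hq : q ≠ 0) (hqG : q ∣ Nat.card G) : (zpowers (g ^ q)).index = q := by
  have hcard : Nat.card (zpowers (g ^ q)) = Nat.card G / q := by
    rw [Nat.card_zpowers, orderOf_pow_of_dvd hq (orderOf_eq_card_of_forall_mem_zpowers hg ▸ hqG),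
      orderOf_eq_card_of_forall_mem_zpowers hg]
  have hpos : 0 < Nat.card G / q :=
    Nat.div_pos (Nat.le_of_dvd Nat.card_pos hqG) (Nat.pos_of_ne_zero hq)
  refine Nat.eq_of_mul_eq_mul_right hpos ?_
  rw [← hcard, index_mul_card, hcard, Nat.mul_div_cancel' hqG]

theorem isCoatom_zpowers_pow_of_prime_dvd_card [Finite G] {g : G} (hg : ∀ x, x ∈ zpowers g)
    {q : ℕ} (hq : q.Prime) (hqG : q ∣ Nat.card G) : IsCoatom (zpowers (g ^ q)) :=
  isCoatom_of_index_prime (by rwa [index_zpowers_pow_of_dvd_card hg hq.ne_zero hqG])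

theorem IsCyclic.exists_isPGroup_of_forall_isCoatom_eq [Finite G] [IsCyclic G]
    (huniq : ∀ M N : Subgroup G, IsCoatom M → IsCoatom N → M = N) :
    ∃ p : ℕ, p.Prime ∧ IsPGroup p G := by
  obtain ⟨g, hg⟩ := IsCyclic.exists_generator (α := G)
  have hprime_dvd_eq {p q : ℕ} (hp : p.Prime) (hq : q.Prime) (hpG : p ∣ Nat.card G)
      (hqG : q ∣ Nat.card G) : q = p :=
    calc q = (zpowers (g ^ q)).index := (index_zpowers_pow_of_dvd_card hg hq.ne_zero hqG).symm
      _ = (zpowers (g ^ p)).index := by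
        rw [huniq _ _ (isCoatom_zpowers_pow_of_prime_dvd_card hg hq hqG)
          (isCoatom_zpowers_pow_of_prime_dvd_card hg hp hpG)]
      _ = p := index_zpowers_pow_of_dvd_card hg hp.ne_zero hpG
  obtain hG | hG := eq_or_ne (Nat.card G) 1
  · exact ⟨2, Nat.prime_two, IsPGroup.of_card (n := 0) (by simp [hG])⟩
  · exact ⟨_, Nat.minFac_prime hG, IsPGroup.of_card (Nat.eq_prime_pow_of_unique_prime_dvd
      Nat.card_pos.ne' fun hq hqG => hprime_dvd_eq (Nat.minFac_prime hG) hq (Nat.minFac_dvd _) hqG)⟩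

end MaximalSubgroups

namespace Representation

variable {k G : Type*} [Field k] [Group G]

def ofUnitsHom (φ : G →* kˣ) : Representation k G k :=
  (algebraMap k (Module.End k k) : k →* Module.End k k).comp ((Units.coeHom k).comp φ)

@[simp]
theorem character_ofUnitsHom (φ : G →* kˣ) (g : G) : (ofUnitsHom φ).character g = φ g := by
  simp [character, ofUnitsHom, Module.algebraMap_end_eq_smul_id]

end Representation

namespace FDRep

universe u

variable {k G : Type u} [Field k] [Group G]

theorem character_of {V : Type u} [AddCommGroup V] [Module k V] [Module.Finite k V]
    (ρ : Representation k G V) : (FDRep.of ρ).character = ρ.character :=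
  rfl

theorem simple_of_ofUnitsHom [IsAlgClosed k] [CharZero k] [Fintype G] (φ : G →* kˣ) :
    Simple (FDRep.of (Representation.ofUnitsHom φ)) := by
  rw [simple_iff_char_is_norm_one, character_of]
  simp

end FDRep

theorem charKernel_of_ofUnitsHom {G : Type} [Group G] (φ : G →* ℂˣ) :
    charKernel (FDRep.of (Representation.ofUnitsHom φ)) = φ.ker := by
  ext g
  simp [charKernel, FDRep.character_of, MonoidHom.mem_ker]

theorem exists_monoidHom_units_ker_eq_of_isCoatom {G : Type*} [Group G] [Finite G]
    {M : Subgroup G} [M.Normal] (hM : IsCoatom M) : ∃ φ : G →* ℂˣ, φ.ker = M := by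
  obtain ⟨g, hg⟩ : ∃ g, g ∉ M := SetLike.exists_not_mem_of_ne_top M hM.1 rfl
  let : CommGroup (G ⧸ M) := (isCyclic_quotient_of_isCoatom hM).commGroup
  obtain ⟨χ, hχ⟩ := CommGroup.exists_apply_ne_one_of_hasEnoughRootsOfUnity (G ⧸ M) ℂ
    (mt (QuotientGroup.eq_one_iff g).mp hg)
  have hle : M ≤ (χ.comp (QuotientGroup.mk' M)).ker := fun x hx => by
    simp [MonoidHom.mem_ker, (QuotientGroup.eq_one_iff x).mpr hx]
  have hne_top : (χ.comp (QuotientGroup.mk' M)).ker ≠ ⊤ := fun htop =>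
    hχ (htop ▸ Subgroup.mem_top g : g ∈ (χ.comp (QuotientGroup.mk' M)).ker)
  exact ⟨_, (hM.ne_top_iff_eq hle).mp hne_top⟩

theorem exists_simple_charKernel_eq_of_isCoatom {G : Type} [Group G] [Fintype G]
    {M : Subgroup G} [M.Normal] (hM : IsCoatom M) :
    ∃ V : FDRep ℂ G, Simple V ∧ charKernel V = M := by
  obtain ⟨φ, hφ⟩ := exists_monoidHom_units_ker_eq_of_isCoatom hM
  exact ⟨_, FDRep.simple_of_ofUnitsHom φ, by rw [charKernel_of_ofUnitsHom, hφ]⟩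

/-- a finite nilpotent group whose irreducible character kernels form a
chain is a cyclic `p`-group for some prime `p`. -/
theorem nilpotent_kernels_chain_cyclic (G : Type) [Group G] [Fintype G]
    (hnil : Group.IsNilpotent G)
    (hker : ∀ V W : FDRep ℂ G, Simple V → Simple W →
      charKernel V ⊆ charKernel W ∨ charKernel W ⊆ charKernel V) :
    IsCyclic G ∧ ∃ p : ℕ, p.Prime ∧ IsPGroup p G := by
  have hnormal {M : Subgroup G} (hM : IsCoatom M) : M.Normal :=
    Subgroup.NormalizerCondition.normal_of_coatom M Group.normalizerCondition_of_isNilpotent hM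
  have hcoatom_eq (M N : Subgroup G) (hM : IsCoatom M) (hN : IsCoatom N) : M = N := by
    have := hnormal hM
    have := hnormal hN
    obtain ⟨V, hV, hVM⟩ := exists_simple_charKernel_eq_of_isCoatom hM
    obtain ⟨W, hW, hWN⟩ := exists_simple_charKernel_eq_of_isCoatom hN
    rcases hker V W hV hW with hVW | hWV
    · exact ((hM.le_iff_eq hN.ne_top).mp (by rwa [hVM, hWN, SetLike.coe_subset_coe] at hVW)).symm
    · exact (hN.le_iff_eq hM.ne_top).mp (by rwa [hVM, hWN, SetLike.coe_subset_coe] at hWV)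
  have hcyclic := isCyclic_of_forall_isCoatom_eq hcoatom_eq
  exact ⟨hcyclic, IsCyclic.exists_isPGroup_of_forall_isCoatom_eq hcoatom_eq⟩
end
end

section
/- Let G be a finite GVZ-group. Then the following are equivalent: (1) G is nested; (2) G is nested by degrees; (3) G is strictly nested by degrees. Moreover, if G is a nested GVZ-group with chain of centers G = X_0 > X_1 > ⋯ > X_n ≥ 1 and 1 = d_0 < d_1 < ⋯ < d_r are the distinct degrees of the irreducible complex characters of G, then r = n and d_i² = |G : X_i| for all 0 ≤ i ≤ r. -/
/-!
Orthogonality gives `∑ g, |χ g|² = |G|` for an irreducible character `χ`. In a GVZ-group `χ`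
vanishes off `Z(χ)` and has modulus `χ(1)` on it, so `|Z(χ)| · χ(1)² = |G|`. Hence a larger
center means a smaller degree and conversely, which makes the three nesting conditions
equivalent and matches the chain of centers with the degrees via `|G : Z(χ)| = χ(1)²`.
-/

open CategoryTheory

noncomputable section

/-- A GVZ-group: every irreducible character vanishes off its center. -/
def IsGVZ (G : Type) [Group G] : Prop :=
  ∀ V : FDRep ℂ G, Simple V → ∀ g : G, g ∉ charCenter V → V.character g = 0

/-- `G` is nested by degrees: `ψ(1) ≤ χ(1)` implies `Z(χ) ≤ Z(ψ)`. -/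
def NestedByDegrees (G : Type) [Group G] : Prop :=
  ∀ V W : FDRep ℂ G, Simple V → Simple W → charDegree W ≤ charDegree V →
    charCenter V ⊆ charCenter W

/-- `G` is strictly nested by degrees: nested by degrees, and `ψ(1) < χ(1)` implies
`Z(χ) < Z(ψ)`. -/
def StrictlyNestedByDegrees (G : Type) [Group G] : Prop :=
  NestedByDegrees G ∧
    ∀ V W : FDRep ℂ G, Simple V → Simple W → charDegree W < charDegree V →
      charCenter V ⊂ charCenter W

open Module ComplexConjugate

namespace Module.End

variable {K V : Type*} [Field K] [AddCommGroup V] [Module K V]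

lemma pow_apply_of_mem_eigenspace {f : End K V} {μ : K} {v : V} (hv : v ∈ f.eigenspace μ)
    (n : ℕ) : (f ^ n) v = μ ^ n • v := by
  induction n <;> simp [*, pow_succ f, mem_eigenspace_iff.mp hv, smul_smul, pow_succ' μ]

lemma HasEigenvalue.pow_eq_one {f : End K V} {μ : K} (hμ : f.HasEigenvalue μ) {m : ℕ}
    (hf : f ^ m = 1) : μ ^ m = 1 := by
  obtain ⟨v, hv⟩ := hμ.exists_hasEigenvector
  exact smul_left_injective K hv.2 (by simpa [hf] using (hv.pow_apply m).symm)

lemma isSemisimple_of_pow_eq_one [CharZero K] {f : End K V} {m : ℕ} (hm : m ≠ 0)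
    (hf : f ^ m = 1) : f.IsSemisimple :=
  isSemisimple_of_squarefree_aeval_eq_zero
    (Polynomial.separable_X_pow_sub_C 1 (by exact_mod_cast hm) one_ne_zero).squarefree
    (by simp [hf])

lemma IsSemisimple.trace_pow [IsAlgClosed K] [FiniteDimensional K V] {f : End K V}
    (hf : f.IsSemisimple) (k : ℕ) :
    LinearMap.trace K V (f ^ k) =
      ∑ μ ∈ f.finite_hasEigenvalue.toFinset, μ ^ k * finrank K (f.eigenspace μ) := by
  classical
  have hint : DirectSum.IsInternal f.eigenspace :=
    DirectSum.isInternal_submodule_of_iSupIndep_of_iSup_eq_top f.eigenspaces_iSupIndep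
      hf.iSup_eigenspace_eq_top
  have hmaps (μ : K) : Set.MapsTo (f ^ k) (f.eigenspace μ) (f.eigenspace μ) :=
    mapsTo_genEigenspace_of_comm (Commute.self_pow f k) μ 1
  rw [LinearMap.trace_eq_sum_trace_restrict' hint f.finite_hasEigenvalue hmaps]
  refine Finset.sum_congr rfl fun μ _ => ?_
  have : (f ^ k).restrict (hmaps μ) = μ ^ k • LinearMap.id := by
    ext ⟨v, hv⟩
    exact pow_apply_of_mem_eigenspace hv k
  rw [this, map_smul, LinearMap.trace_id, smul_eq_mul]

end Module.End

lemma Module.End.trace_pow_pred_eq_conj_trace {V : Type*} [AddCommGroup V] [Module ℂ V]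
    [FiniteDimensional ℂ V] {f : End ℂ V} {m : ℕ} (hm : m ≠ 0) (hf : f ^ m = 1) :
    LinearMap.trace ℂ V (f ^ (m - 1)) = conj (LinearMap.trace ℂ V f) := by
  have hss := isSemisimple_of_pow_eq_one hm hf
  conv_rhs => rw [← pow_one f]
  rw [hss.trace_pow, hss.trace_pow, map_sum]
  refine Finset.sum_congr rfl fun μ hμ => ?_
  have hμm : μ ^ m = 1 := (f.finite_hasEigenvalue.mem_toFinset.mp hμ).pow_eq_one hf
  have hconj : conj μ = μ ^ (m - 1) := by
    rw [← Complex.inv_eq_conj (Complex.norm_eq_one_of_pow_eq_one hμm hm)]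
    exact (eq_inv_of_mul_eq_one_left (by rw [pow_sub_one_mul hm, hμm])).symm
  simp [hconj]

lemma FDRep.char_inv {G : Type} [Group G] [Finite G] (V : FDRep ℂ G) (g : G) :
    V.character g⁻¹ = conj (V.character g) := by
  have hm : Nat.card G ≠ 0 := Nat.card_pos.ne'
  have hinv : g⁻¹ = g ^ (Nat.card G - 1) :=
    (eq_inv_of_mul_eq_one_left (by rw [pow_sub_one_mul hm, pow_card_eq_one'])).symm
  rw [hinv, FDRep.character, FDRep.character, map_pow]
  exact Module.End.trace_pow_pred_eq_conj_trace hm (by rw [← map_pow, pow_card_eq_one', map_one])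

lemma char_mul_char_inv_of_mem_charCenter {G : Type} [Group G] [Finite G] {V : FDRep ℂ G}
    {g : G} (hg : g ∈ charCenter V) :
    V.character g * V.character g⁻¹ = (charDegree V : ℂ) ^ 2 := by
  have hg : (‖V.character g‖ : ℂ) = V.character 1 := hg
  rw [FDRep.char_inv, Complex.mul_conj, Complex.normSq_eq_norm_sq]
  push_cast
  rw [hg, FDRep.char_one]
  rfl

namespace IsGVZ

variable {G : Type} [Group G] [Fintype G]

lemma card_charCenter_mul_charDegree_sq (hG : IsGVZ G) {V : FDRep ℂ G} (hV : Simple V) :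
    Nat.card (charCenter V) * charDegree V ^ 2 = Nat.card G := by
  classical
  have hsum := (FDRep.simple_iff_char_is_norm_one V).mp hV
  have hterm (g : G) : V.character g * V.character g⁻¹ =
      if g ∈ charCenter V then (charDegree V : ℂ) ^ 2 else 0 := by
    split_ifs with hg
    · exact char_mul_char_inv_of_mem_charCenter hg
    · rw [hG V hV g hg, zero_mul]
  rw [Finset.sum_congr rfl fun g _ => hterm g, Finset.sum_ite, Finset.sum_const_zero, add_zero,
    Finset.sum_const, nsmul_eq_mul, ← Fintype.card_subtype, ← Nat.card_eq_fintype_card] at hsum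
  exact_mod_cast hsum

lemma charDegree_le_of_charCenter_subset (hG : IsGVZ G) {V W : FDRep ℂ G} (hV : Simple V)
    (hW : Simple W) (h : charCenter V ⊆ charCenter W) : charDegree W ≤ charDegree V := by
  have hVG := hG.card_charCenter_mul_charDegree_sq hV
  have hWG := hG.card_charCenter_mul_charDegree_sq hW
  have hW0 : 0 < Nat.card (charCenter W) := Nat.pos_of_mul_pos_right (hWG ▸ Nat.card_pos)
  by_contra! hlt
  have : Nat.card G < Nat.card G := calc
    _ = Nat.card (charCenter V) * charDegree V ^ 2 := hVG.symm
    _ ≤ Nat.card (charCenter W) * charDegree V ^ 2 :=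
      Nat.mul_le_mul_right _ (Set.ncard_le_ncard h (Set.toFinite _))
    _ < Nat.card (charCenter W) * charDegree W ^ 2 :=
      Nat.mul_lt_mul_of_pos_left (Nat.pow_lt_pow_left hlt two_ne_zero) hW0
    _ = Nat.card G := hWG
  exact this.false

lemma charDegree_lt_of_charCenter_ssubset (hG : IsGVZ G) {V W : FDRep ℂ G} (hV : Simple V)
    (hW : Simple W) (h : charCenter V ⊂ charCenter W) : charDegree W < charDegree V := by
  have hVG := hG.card_charCenter_mul_charDegree_sq hV
  have hWG := hG.card_charCenter_mul_charDegree_sq hW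
  have hW0 : 0 < charDegree W ^ 2 := Nat.pos_of_mul_pos_left (hWG ▸ Nat.card_pos)
  by_contra! hle
  have : Nat.card G < Nat.card G := calc
    _ = Nat.card (charCenter V) * charDegree V ^ 2 := hVG.symm
    _ ≤ Nat.card (charCenter V) * charDegree W ^ 2 :=
      Nat.mul_le_mul_left _ (Nat.pow_le_pow_left hle 2)
    _ < Nat.card (charCenter W) * charDegree W ^ 2 :=
      Nat.mul_lt_mul_of_pos_right (Set.ncard_lt_ncard h (Set.toFinite _)) hW0
    _ = Nat.card G := hWG
  exact this.false

lemma index_eq_charDegree_sq (hG : IsGVZ G) {V : FDRep ℂ G} (hV : Simple V) {H : Subgroup G}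
    (hH : charCenter V = H) : H.index = charDegree V ^ 2 := by
  have hVG := hG.card_charCenter_mul_charDegree_sq hV
  rw [hH, ← H.index_mul_card] at hVG
  exact Nat.eq_of_mul_eq_mul_right Nat.card_pos (by rw [← hVG, mul_comm]; rfl)

lemma nestedByDegrees_of_nested (hG : IsGVZ G) (h : Nested G) : NestedByDegrees G := by
  intro V W hV hW hdeg
  rcases h V W hV hW with hVW | hWV
  · exact hVW
  rcases hWV.eq_or_ssubset with hWV | hWV
  · exact hWV.ge
  · exact absurd hdeg (hG.charDegree_lt_of_charCenter_ssubset hW hV hWV).not_ge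

lemma strictlyNestedByDegrees_of_nestedByDegrees (hG : IsGVZ G) (h : NestedByDegrees G) :
    StrictlyNestedByDegrees G := by
  refine ⟨h, fun V W hV hW hlt => (h V W hV hW hlt.le).ssubset_of_ne fun hVW => ?_⟩
  exact hlt.not_ge (hG.charDegree_le_of_charCenter_subset hW hV hVW.ge)

end IsGVZ

lemma nested_of_nestedByDegrees {G : Type} [Group G] (h : NestedByDegrees G) : Nested G :=
  fun V W hV hW => (le_total (charDegree W) (charDegree V)).imp (h V W hV hW) (h W V hW hV)

lemma StrictMono.eq_of_range_eq_of_fin {α : Type*} [Preorder α] {m k : ℕ} {a : Fin m → α}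
    {b : Fin k → α} (ha : StrictMono a) (hb : StrictMono b) (h : Set.range a = Set.range b) :
    ∃ hmk : m = k, a = b ∘ Fin.cast hmk := by
  have hmk : m = k := by
    simpa [Set.ncard_range_of_injective ha.injective, Set.ncard_range_of_injective hb.injective]
      using congrArg Set.ncard h
  subst hmk
  exact ⟨rfl, (ha.range_inj hb).mp h⟩

theorem IsGVZ.sq_degree_eq_index_chainOfCenters {G : Type} [Group G] [Fintype G] (hG : IsGVZ G)
    {n : ℕ} {X : ℕ → Subgroup G} (hX : IsChainOfCenters n X) {r : ℕ} {d : ℕ → ℕ}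
    (hd : ∀ i < r, d i < d (i + 1))
    (hdeg : ∀ i ≤ r, ∃ V : FDRep ℂ G, Simple V ∧ charDegree V = d i)
    (hdeg' : ∀ V : FDRep ℂ G, Simple V → ∃ i ≤ r, charDegree V = d i) :
    r = n ∧ ∀ i ≤ r, d i ^ 2 = (X i).index := by
  obtain ⟨-, -, hXlt, hcenter, hcenter'⟩ := hX
  let index : Fin (n + 1) → ℕ := fun i => (X i).index
  let degSq : Fin (r + 1) → ℕ := fun j => d j ^ 2
  have hindex : StrictMono index :=
    Fin.strictMono_iff_lt_succ.mpr fun i => Subgroup.index_strictAnti (hXlt i i.isLt)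
  have hdegSq : StrictMono degSq :=
    Fin.strictMono_iff_lt_succ.mpr fun j => Nat.pow_lt_pow_left (hd j j.isLt) two_ne_zero
  have hrange : Set.range index = Set.range degSq := by
    apply Set.Subset.antisymm
    · rintro _ ⟨i, rfl⟩
      obtain ⟨V, hV, hVX⟩ := hcenter i (Nat.lt_succ_iff.mp i.isLt)
      obtain ⟨j, hj, hVd⟩ := hdeg' V hV
      exact ⟨⟨j, Nat.lt_succ_of_le hj⟩,
        by simp [index, degSq, hG.index_eq_charDegree_sq hV hVX, hVd]⟩
    · rintro _ ⟨j, rfl⟩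
      obtain ⟨V, hV, hVd⟩ := hdeg j (Nat.lt_succ_iff.mp j.isLt)
      obtain ⟨i, hi, hVX⟩ := hcenter' V hV
      exact ⟨⟨i, Nat.lt_succ_of_le hi⟩,
        by simp [index, degSq, hG.index_eq_charDegree_sq hV hVX, hVd]⟩
  obtain ⟨hnr, heq⟩ := hindex.eq_of_range_eq_of_fin hdegSq hrange
  refine ⟨by omega, fun i hi => ?_⟩
  simpa [index, degSq] using (congrFun heq ⟨i, by omega⟩).symm

/-- for a finite GVZ-group `G`: nested ↔ nested by degrees ↔ strictly nested
by degrees; and if `G` is a nested GVZ-group with chain of centers `X 0 > ⋯ > X n` and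
distinct character degrees `1 = d 0 < d 1 < ⋯ < d r`, then `r = n` and
`(d i)² = |G : X i|` for all `i ≤ r`. -/
theorem gvz_nested_equivalences (G : Type) [Group G] [Fintype G] (hGVZ : IsGVZ G) :
    ((Nested G ↔ NestedByDegrees G) ∧ (Nested G ↔ StrictlyNestedByDegrees G)) ∧
    (Nested G →
      ∀ (n : ℕ) (X : ℕ → Subgroup G), IsChainOfCenters n X →
        ∀ (r : ℕ) (d : ℕ → ℕ), d 0 = 1 → (∀ i < r, d i < d (i + 1)) →
          (∀ i ≤ r, ∃ V : FDRep ℂ G, Simple V ∧ charDegree V = d i) →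
          (∀ V : FDRep ℂ G, Simple V → ∃ i ≤ r, charDegree V = d i) →
          r = n ∧ ∀ i ≤ r, (d i) ^ 2 = (X i).index) := by
  have hNBD := hGVZ.nestedByDegrees_of_nested
  refine ⟨⟨⟨hNBD, nested_of_nestedByDegrees⟩,
    ⟨fun h => hGVZ.strictlyNestedByDegrees_of_nestedByDegrees (hNBD h),
      fun h => nested_of_nestedByDegrees h.1⟩⟩, ?_⟩
  intro _ n X hX r d _ hd hdeg hdeg'
  exact hGVZ.sq_degree_eq_index_chainOfCenters hX hd hdeg hdeg'
end
end
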